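/- arXiv:2605.13590 — 4 statements merged into one kernel-verified Lean document; each statement's English description precedes it below -/
import Mathlib

section
/- For the rational functions F1(t) = 27(t+1)(t+9)^3/t^3, F2(t) = t(t^2+3t+3), G1(t) = t^3, G2(t) = 3(t+1)(t-3)/t, and G3(t) = (t^2+3t+3)/t, one has the identity F1(F2(t)) = G1(G2(G3(t))) as rational functions in t. -/
noncomputable def F1 (t : ℚ) : ℚ := 27*(t+1)*(t+9)^3/t^3
noncomputable def F2 (t : ℚ) : ℚ := t*(t^2+3*t+3)
noncomputable def G1 (t : ℚ) : ℚ := t^3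
noncomputable def G2 (t : ℚ) : ℚ := 3*(t+1)*(t-3)/t
noncomputable def G3 (t : ℚ) : ℚ := (t^2+3*t+3)/t

/-- F1(F2(t)) = G1(G2(G3(t))) wherever both sides are defined. -/
theorem stmt_0 (t : ℚ) (ht : t ≠ 0) (h1 : F2 t ≠ 0) (h2 : G3 t ≠ 0) :
    F1 (F2 t) = G1 (G2 (G3 t)) := by
  simp only [F1, F2, G1, G2, G3] at *
  have hq : t^2+3*t+3 ≠ 0 := by
    intro h; apply h1; rw [h]; ring
  field_simp
  ring
end

section
/- The j-invariant of the elliptic curve y^2 = x^3 - 3(t-3)(t+1)(t^2-6t-3)x - 2(t^2+3)(t^2-6t-3)^2 equals G1(G2(t)) = 27(t+1)^3(t-3)^3/t^3, for every rational t for which the curve is nonsingular and t ≠ 0. -/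
/-- The j-invariant of y² = x³ - 3(t-3)(t+1)(t²-6t-3)x - 2(t²+3)(t²-6t-3)²
equals 27(t+1)³(t-3)³/t³, whenever the curve is nonsingular and t ≠ 0. -/
theorem stmt_4 (t : ℚ) (h0 : t ≠ 0)
    (hns : 4*(-3*(t-3)*(t+1)*(t^2-6*t-3))^3
         + 27*(-2*(t^2+3)*(t^2-6*t-3)^2)^2 ≠ 0) :
    1728 * (4*(-3*(t-3)*(t+1)*(t^2-6*t-3))^3) /
      (4*(-3*(t-3)*(t+1)*(t^2-6*t-3))^3 + 27*(-2*(t^2+3)*(t^2-6*t-3)^2)^2)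
      = 27*(t+1)^3*(t-3)^3/t^3 := by
  rw [div_eq_div_iff hns (pow_ne_zero 3 h0)]
  ring
end

section
/- Let a, b be rationals with a ≠ 0 such that -3(81b^2 + 12a^3) is a nonzero square. If x^3 + ax + b has roots x1, x2, x3 and n, r are rationals with n ≠ 0, then the polynomial ∏_{i=1}^{3}(x - (2an/3 + rn·x_i + n·x_i^2)) equals x^3 + a_*(r) n^2 x + b_*(r) n^3, where a_*(r) = (3ar^2 - a^2 + 9br)/3 and b_*(r) = (-18a^2r^2 + 27br^3 - 2a^3 - 27abr - 27b^2)/27. -/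
/-- If x³ + ax + b has roots x₁, x₂, x₃ in ℂ and n ≠ 0, r are rational, then
∏ᵢ (x - (2an/3 + rn·xᵢ + n·xᵢ²)) = x³ + a₍*₎(r)n²x + b₍*₎(r)n³. -/
theorem stmt_16 (a b : ℚ) (ha : a ≠ 0)
    (hsq : ∃ s : ℚ, s ≠ 0 ∧ -3*(81*b^2 + 12*a^3) = s^2)
    (x1 x2 x3 : ℂ)
    (hroots : ∀ x : ℂ, x^3 + (a:ℂ)*x + (b:ℂ) = (x - x1)*(x - x2)*(x - x3))
    (n r : ℚ) (hn : n ≠ 0) :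
    ∀ x : ℂ,
      (x - (2*(a:ℂ)*(n:ℂ)/3 + (r:ℂ)*(n:ℂ)*x1 + (n:ℂ)*x1^2))
        * (x - (2*(a:ℂ)*(n:ℂ)/3 + (r:ℂ)*(n:ℂ)*x2 + (n:ℂ)*x2^2))
        * (x - (2*(a:ℂ)*(n:ℂ)/3 + (r:ℂ)*(n:ℂ)*x3 + (n:ℂ)*x3^2))
      = x^3 + (((3*a*r^2 - a^2 + 9*b*r)/3 : ℚ) : ℂ) * (n:ℂ)^2 * x
          + (((-18*a^2*r^2 + 27*b*r^3 - 2*a^3 - 27*a*b*r - 27*b^2)/27 : ℚ) : ℂ)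
              * (n:ℂ)^3 := by
  have h0 := hroots 0
  have h1 := hroots 1
  have hm1 := hroots (-1)
  have he1 : x1 + x2 + x3 = 0 := by linear_combination h1/2 + hm1/2 - h0
  have he3 : (b:ℂ) = -(x1*x2*x3) := by linear_combination h0
  have hx3 : x3 = -x1 - x2 := by linear_combination he1
  have he2 : (a:ℂ) = x1*x2 + x1*x3 + x2*x3 := by linear_combination h1 - h0 - he1
  rw [hx3] at he2 he3
  intro x
  push_cast
  rw [hx3, he2, he3]
  ring
end

section
/- Define n(r) = -6(5r^2+40r+176)(5r^2+16r-112)/(23r^4-144r^3-2592r^2-14080r-2304) and m(r) = -24(5r^2+16r-112)(r^2+56r+112)/(23r^4-144r^3-2592r^2-14080r-2304), and set a_*(n,m) = 80n^2 - 56nm + 2m^2 and d_*(n,m) = 24n^2 + 4nm - 2m^2. Then for every rational r at which the denominator is nonzero, (a_*(n(r),m(r)) + 2 d_*(n(r),m(r)))^2 - 1728(a_*(n(r),m(r)) + 6 d_*(n(r),m(r))) = 0. -/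
/-- For n(r), m(r) as given and a₍*₎(n,m) = 80n² - 56nm + 2m²,
d₍*₎(n,m) = 24n² + 4nm - 2m², the point (n(r), m(r)) lies on the quartic
(a₍*₎ + 2d₍*₎)² - 1728(a₍*₎ + 6d₍*₎) = 0. -/
theorem stmt_19 (r : ℚ)
    (hden : 23*r^4 - 144*r^3 - 2592*r^2 - 14080*r - 2304 ≠ 0) :
    let den := 23*r^4 - 144*r^3 - 2592*r^2 - 14080*r - 2304
    let n := -6*(5*r^2 + 40*r + 176)*(5*r^2 + 16*r - 112) / den
    let m := -24*(5*r^2 + 16*r - 112)*(r^2 + 56*r + 112) / den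
    let aS := 80*n^2 - 56*n*m + 2*m^2
    let dS := 24*n^2 + 4*n*m - 2*m^2
    (aS + 2*dS)^2 - 1728*(aS + 6*dS) = 0 := by
  intro den n m aS dS
  have hd : den ≠ 0 := hden
  simp only [aS, dS, n, m, den, div_pow, div_mul_div_comm]
  field_simp
  ring
end
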